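/- arXiv:2108.08267 — 5 statements merged into one kernel-verified Lean document; each statement's English description precedes it below -/
import Mathlib

section
/- Let F be a long-tailed distribution function on the real line and set R(x) = −ln F̄(x). Suppose there exist γ < 1 and A′ < ∞ such that R(x) − R(x−y) ≤ γ R(y) + A′ for all x > 0 and all y ∈ [0, x/2]. If, in addition, the function x ↦ exp(−(1−γ) R(x)) is integrable over [0, ∞), then F is strong subexponential (F ∈ S*). -/
/-!
Write `f = 1 - F` and `m = ∫₀^∞ f`. By symmetry the convolution integral over `[0, x]` is twice
the one over `[0, x/2]`. On `[0, x/2]` the hypothesis on `R = -log f` is the pointwise bound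
`f(x-y) f(y) ≤ e^{A'} f(x) G(y)` with `G = exp(-(1-γ)R)` integrable. Splitting `[0, x/2]` at a
large fixed `h`: on `[0, h]` long-tailedness gives `f(x-y) ≈ f(x)`, so that part is `≈ m f(x)`,
while on `[h, x/2]` the bound gives at most `e^{A'} f(x) ∫_h^∞ G`, which is small compared with
`f(x)`. Since `R → ∞`, the hypothesis at `y = x/2` forces `γ ≥ 0`, whence `f ≤ G` and `m < ∞`.
-/

open MeasureTheory ProbabilityTheory Filter Set

/-- A tail function `Fbar` is strong subexponential (`F ∈ 𝒮*`) if it is everywhere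
positive, has finite mean `m = ∫₀^∞ F̄(y) dy` on the positive half-line, and
`∫₀ˣ F̄(x-y) F̄(y) dy ∼ 2 m F̄(x)` as `x → ∞`. -/
def IsStrongSubexp (Fbar : ℝ → ℝ) : Prop :=
  (∀ x, 0 < Fbar x) ∧
  MeasureTheory.IntegrableOn Fbar (Set.Ioi 0) ∧
  Filter.Tendsto
    (fun x => (∫ y in (0:ℝ)..x, Fbar (x - y) * Fbar y) /
      (2 * (∫ y in Set.Ioi (0:ℝ), Fbar y) * Fbar x))
    Filter.atTop (nhds 1)

open Real

def IsLongTailed (f : ℝ → ℝ) : Prop :=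
  Tendsto (fun x => f (x - 1) / f x) atTop (nhds 1)

section TailFunction

variable {f : ℝ → ℝ}

lemma IsLongTailed.tendsto_div_sub_natCast (hlong : IsLongTailed f) (hpos : ∀ x, 0 < f x)
    (n : ℕ) : Tendsto (fun x => f (x - n) / f x) atTop (nhds 1) := by
  induction n with
  | zero => simpa using tendsto_const_nhds.congr fun x => (div_self (hpos x).ne').symm
  | succ n ih =>
    have hshift := hlong.comp (tendsto_atTop_add_const_right atTop (-(n : ℝ)) tendsto_id)
    have := hshift.mul ih
    rw [mul_one] at this
    refine this.congr fun x => ?_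
    rw [Function.comp_apply, id, ← sub_eq_add_neg, div_mul_div_cancel₀ (hpos _).ne']
    push_cast
    rw [sub_sub]

lemma IsLongTailed.tendsto_div_sub (hlong : IsLongTailed f) (hpos : ∀ x, 0 < f x)
    (hanti : Antitone f) {h : ℝ} (hh : 0 ≤ h) :
    Tendsto (fun x => f (x - h) / f x) atTop (nhds 1) :=
  tendsto_of_tendsto_of_tendsto_of_le_of_le tendsto_const_nhds
    (hlong.tendsto_div_sub_natCast hpos ⌈h⌉₊)
    (fun x => (one_le_div (hpos x)).2 (hanti (by linarith)))
    (fun x => div_le_div_of_nonneg_right (hanti (by linarith [Nat.le_ceil h])) (hpos x).le)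

lemma Antitone.intervalIntegrable_mul_comp_sub (hanti : Antitone f) (hnonneg : ∀ x, 0 ≤ f x)
    (x a b : ℝ) : IntervalIntegrable (fun y => f (x - y) * f y) volume a b := by
  refine intervalIntegrable_iff.2 <|
    (hanti.intervalIntegrable (a := a) (b := b)).def'.bdd_mul (c := f (x - max a b)) ?_ ?_
  · exact (hanti.measurable.comp (measurable_const.sub measurable_id)).aestronglyMeasurable
  · refine ae_restrict_of_forall_mem measurableSet_uIoc fun y hy => ?_
    rw [Real.norm_of_nonneg (hnonneg _)]
    exact hanti (by linarith [hy.2])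

lemma Antitone.intervalIntegral_mul_comp_sub_eq_two_mul (hanti : Antitone f)
    (hnonneg : ∀ x, 0 ≤ f x) (x : ℝ) :
    ∫ y in 0..x, f (x - y) * f y = 2 * ∫ y in 0..x / 2, f (x - y) * f y := by
  have hint := hanti.intervalIntegrable_mul_comp_sub hnonneg x
  have hreflect : ∫ y in x / 2..x, f (x - y) * f y = ∫ y in 0..x / 2, f (x - y) * f y := by
    have := intervalIntegral.integral_comp_sub_left (fun y => f (x - y) * f y) x (a := 0)
      (b := x / 2)
    simp only [sub_sub_cancel, sub_zero, sub_half] at this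
    rw [← this]
    simp_rw [mul_comm]
  rw [← intervalIntegral.integral_add_adjacent_intervals (hint 0 (x / 2)) (hint (x / 2) x),
    hreflect, two_mul]

lemma Antitone.mul_intervalIntegral_le_intervalIntegral_mul_comp_sub (hanti : Antitone f)
    (hnonneg : ∀ x, 0 ≤ f x) {x : ℝ} (hx : 0 ≤ x) :
    f x * ∫ y in 0..x / 2, f y ≤ ∫ y in 0..x / 2, f (x - y) * f y := by
  rw [← intervalIntegral.integral_const_mul]
  refine intervalIntegral.integral_mono_on (by linarith) (hanti.intervalIntegrable.const_mul _)
    (hanti.intervalIntegrable_mul_comp_sub hnonneg x _ _) fun y hy => ?_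
  exact mul_le_mul_of_nonneg_right (hanti (by linarith [hy.1])) (hnonneg y)

lemma intervalIntegral_le_integral_Ioi {g : ℝ → ℝ} {a b : ℝ} (hab : a ≤ b)
    (hint : IntegrableOn g (Ioi a)) (hnonneg : ∀ y, 0 ≤ g y) :
    ∫ y in a..b, g y ≤ ∫ y in Ioi a, g y := by
  rw [intervalIntegral.integral_of_le hab]
  exact setIntegral_mono_set hint (Eventually.of_forall hnonneg) Ioc_subset_Ioi_self.eventuallyLE

lemma Antitone.intervalIntegral_mul_comp_sub_le (hanti : Antitone f) (hnonneg : ∀ x, 0 ≤ f x)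
    (hf : IntegrableOn f (Ioi 0)) {G : ℝ → ℝ} {h x : ℝ} (hG : IntegrableOn G (Ioi h))
    (hG_nonneg : ∀ y, 0 ≤ G y) (hh : 0 ≤ h) (hhx : h ≤ x / 2)
    (hbound : ∀ y ∈ Icc h (x / 2), f (x - y) * f y ≤ f x * G y) :
    ∫ y in 0..x / 2, f (x - y) * f y ≤
      f (x - h) * (∫ y in Ioi 0, f y) + f x * ∫ y in Ioi h, G y := by
  have hint := hanti.intervalIntegrable_mul_comp_sub hnonneg x
  have hnear : ∫ y in 0..h, f (x - y) * f y ≤ f (x - h) * ∫ y in Ioi 0, f y :=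
    calc ∫ y in 0..h, f (x - y) * f y ≤ ∫ y in 0..h, f (x - h) * f y :=
          intervalIntegral.integral_mono_on hh (hint 0 h) (hanti.intervalIntegrable.const_mul _)
            fun y hy => mul_le_mul_of_nonneg_right (hanti (by linarith [hy.2])) (hnonneg y)
      _ ≤ f (x - h) * ∫ y in Ioi 0, f y := by
          rw [intervalIntegral.integral_const_mul]
          exact mul_le_mul_of_nonneg_left (intervalIntegral_le_integral_Ioi hh hf hnonneg)
            (hnonneg _)
  have hfar : ∫ y in h..x / 2, f (x - y) * f y ≤ f x * ∫ y in Ioi h, G y :=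
    calc ∫ y in h..x / 2, f (x - y) * f y ≤ ∫ y in h..x / 2, f x * G y :=
          intervalIntegral.integral_mono_on hhx (hint h (x / 2))
            (((intervalIntegrable_iff_integrableOn_Ioc_of_le hhx).2
              (hG.mono_set Ioc_subset_Ioi_self)).const_mul _) hbound
      _ ≤ f x * ∫ y in Ioi h, G y := by
          rw [intervalIntegral.integral_const_mul]
          exact mul_le_mul_of_nonneg_left (intervalIntegral_le_integral_Ioi hhx hG hG_nonneg)
            (hnonneg _)
  rw [← intervalIntegral.integral_add_adjacent_intervals (hint 0 h) (hint h (x / 2))]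
  exact add_le_add hnear hfar

lemma IsLongTailed.eventually_intervalIntegral_mul_comp_sub_lt (hlong : IsLongTailed f)
    (hpos : ∀ x, 0 < f x) (hanti : Antitone f) (hf : IntegrableOn f (Ioi 0)) {G : ℝ → ℝ}
    (hG : IntegrableOn G (Ioi 0)) (hG_nonneg : ∀ y, 0 ≤ G y)
    (hbound : ∀ x > 0, ∀ y ∈ Icc 0 (x / 2), f (x - y) * f y ≤ f x * G y) {ε : ℝ} (hε : 0 < ε) :
    ∀ᶠ x in atTop, ∫ y in 0..x / 2, f (x - y) * f y < ((∫ y in Ioi 0, f y) + ε) * f x := by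
  have hnonneg : ∀ x, 0 ≤ f x := fun x => (hpos x).le
  set m := ∫ y in Ioi 0, f y
  obtain ⟨h, hh, htail⟩ : ∃ h, 0 ≤ h ∧ ∫ y in Ioi h, G y < ε / 2 :=
    ((eventually_ge_atTop 0).and
      ((tendsto_integral_Ioi_zero tendsto_id).eventually_lt_const (half_pos hε))).exists
  have hnear : Tendsto (fun x => f (x - h) / f x * m) atTop (nhds m) := by
    simpa using (hlong.tendsto_div_sub hpos hanti hh).mul_const m
  filter_upwards [hnear.eventually_lt_const (by linarith : m < m + ε / 2),
    eventually_ge_atTop (2 * h), eventually_gt_atTop 0] with x hshift hx hx0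
  rw [div_mul_eq_mul_div, div_lt_iff₀ (hpos x)] at hshift
  calc ∫ y in 0..x / 2, f (x - y) * f y
      ≤ f (x - h) * m + f x * ∫ y in Ioi h, G y :=
        hanti.intervalIntegral_mul_comp_sub_le hnonneg hf (hG.mono_set (Ioi_subset_Ioi hh))
          hG_nonneg hh (by linarith) fun y hy => hbound x hx0 y ⟨hh.trans hy.1, hy.2⟩
    _ < (m + ε / 2) * f x + f x * (ε / 2) :=
        add_lt_add_of_lt_of_le hshift (mul_le_mul_of_nonneg_left htail.le (hnonneg x))
    _ = (m + ε) * f x := by ring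

theorem IsLongTailed.tendsto_intervalIntegral_mul_comp_sub_div (hlong : IsLongTailed f)
    (hpos : ∀ x, 0 < f x) (hanti : Antitone f) (hf : IntegrableOn f (Ioi 0)) {G : ℝ → ℝ}
    (hG : IntegrableOn G (Ioi 0)) (hG_nonneg : ∀ y, 0 ≤ G y)
    (hbound : ∀ x > 0, ∀ y ∈ Icc 0 (x / 2), f (x - y) * f y ≤ f x * G y) :
    Tendsto (fun x => (∫ y in 0..x, f (x - y) * f y) / (2 * (∫ y in Ioi 0, f y) * f x))
      atTop (nhds 1) := by
  have hnonneg : ∀ x, 0 ≤ f x := fun x => (hpos x).le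
  set m := ∫ y in Ioi 0, f y
  have hm : 0 < m := by
    refine (setIntegral_pos_iff_support_of_nonneg_ae (Eventually.of_forall hnonneg) hf).2 ?_
    simp [Function.support, (hpos _).ne']
  have hhalf : ∀ x, (∫ y in 0..x, f (x - y) * f y) / (2 * m * f x) =
      (∫ y in 0..x / 2, f (x - y) * f y) / (m * f x) := fun x => by
    rw [hanti.intervalIntegral_mul_comp_sub_eq_two_mul hnonneg, mul_assoc,
      mul_div_mul_left _ _ two_ne_zero]
  simp_rw [hhalf]
  refine tendsto_order.2 ⟨fun b hb => ?_, fun b hb => ?_⟩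
  · have hmean : Tendsto (fun x => (∫ y in 0..x / 2, f y) / m) atTop (nhds 1) := by
      have := (intervalIntegral_tendsto_integral_Ioi 0 hf
        (tendsto_id.atTop_div_const two_pos)).div_const m
      rwa [div_self hm.ne'] at this
    filter_upwards [hmean.eventually_const_lt hb, eventually_ge_atTop 0] with x hbx hx
    calc b < (∫ y in 0..x / 2, f y) / m := hbx
      _ = f x * (∫ y in 0..x / 2, f y) / (m * f x) := by field_simp [(hpos x).ne']
      _ ≤ _ := div_le_div_of_nonneg_right
          (hanti.mul_intervalIntegral_le_intervalIntegral_mul_comp_sub hnonneg hx)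
          (mul_pos hm (hpos x)).le
  · filter_upwards [hlong.eventually_intervalIntegral_mul_comp_sub_lt hpos hanti hf hG hG_nonneg
      hbound (mul_pos (sub_pos.2 hb) hm)] with x hx
    rw [div_lt_iff₀ (mul_pos hm (hpos x))]
    linarith

end TailFunction

lemma mul_le_mul_exp_of_neg_log_sub_le {a b c γ A : ℝ} (ha : 0 < a) (hb : 0 < b) (hc : 0 < c)
    (h : -log a - -log b ≤ γ * -log c + A) :
    b * c ≤ a * (exp A * exp (-(1 - γ) * -log c)) :=
  calc b * c = exp (log b + log c) := by rw [exp_add, exp_log hb, exp_log hc]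
    _ ≤ exp (log a + (A + -(1 - γ) * -log c)) := exp_le_exp.2 (by linarith)
    _ = a * (exp A * exp (-(1 - γ) * -log c)) := by rw [exp_add, exp_add, exp_log ha]

lemma le_exp_neg_mul_neg_log {a γ : ℝ} (ha : 0 < a) (ha₁ : a ≤ 1) (hγ : 0 ≤ γ) :
    a ≤ exp (-(1 - γ) * -log a) :=
  calc a = exp (-(-log a)) := by rw [neg_neg, exp_log ha]
    _ ≤ exp (-(1 - γ) * -log a) :=
        exp_le_exp.2 (by nlinarith [mul_nonpos_of_nonneg_of_nonpos hγ (log_nonpos ha.le ha₁)])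

lemma nonneg_of_sub_le_mul_add {R : ℝ → ℝ} {γ A : ℝ} (hmono : Monotone R)
    (htop : Tendsto R atTop atTop) (h : ∀ t > 0, R (2 * t) - R t ≤ γ * R t + A) : 0 ≤ γ := by
  by_contra! hγ
  obtain ⟨t, ht, hRt⟩ :=
    ((eventually_gt_atTop 0).and (htop.eventually_gt_atTop (A / -γ))).exists
  rw [div_lt_iff₀ (neg_pos.2 hγ)] at hRt
  linarith [h t ht, hmono (by linarith : t ≤ 2 * t)]

theorem strong_subexp_criterion_general
    (F : ℝ → ℝ)
    -- F is a distribution function on ℝ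
    (hF_mono : Monotone F)
    (hF_top : Tendsto F atTop (nhds 1)) (hF_bot : Tendsto F atBot (nhds 0))
    -- right-unbounded support: F̄(x) > 0 for all x
    (hF_pos : ∀ x, F x < 1)
    -- F is long-tailed
    (hF_long : Tendsto (fun x => (1 - F (x - 1)) / (1 - F x)) atTop (nhds 1))
    (γ A' : ℝ)
    (hR : ∀ x > (0:ℝ), ∀ y ∈ Set.Icc (0:ℝ) (x / 2),
      (-Real.log (1 - F x)) - (-Real.log (1 - F (x - y))) ≤ γ * (-Real.log (1 - F y)) + A')
    (hint : IntegrableOn (fun x => Real.exp (-(1 - γ) * (-Real.log (1 - F x)))) (Set.Ici 0)) :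
    IsStrongSubexp (fun x => 1 - F x) := by
  have hpos : ∀ x, 0 < 1 - F x := fun x => sub_pos.2 (hF_pos x)
  have hanti : Antitone fun x => 1 - F x := fun a b hab => sub_le_sub_left (hF_mono hab) 1
  have hle_one : ∀ x, 1 - F x ≤ 1 := fun x => sub_le_self 1 (hF_mono.le_of_tendsto hF_bot x)
  have hR_top : Tendsto (fun x => -log (1 - F x)) atTop atTop := by
    have : Tendsto (fun x => 1 - F x) atTop (nhdsWithin 0 (Ioi 0)) :=
      tendsto_nhdsWithin_iff.2 ⟨by simpa using (tendsto_const_nhds (x := (1 : ℝ))).sub hF_top,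
        Eventually.of_forall hpos⟩
    exact tendsto_neg_atBot_atTop.comp (tendsto_log_nhdsGT_zero.comp this)
  have hγ : 0 ≤ γ := by
    refine nonneg_of_sub_le_mul_add (A := A')
      (fun a b hab => neg_le_neg (log_le_log (hpos b) (hanti hab))) hR_top fun t ht => ?_
    have := hR (2 * t) (by positivity) t ⟨ht.le, by linarith⟩
    rwa [show 2 * t - t = t by ring] at this
  have hG : IntegrableOn (fun x => exp (-(1 - γ) * -log (1 - F x))) (Ioi 0) :=
    hint.mono_set Ioi_subset_Ici_self
  have hf : IntegrableOn (fun x => 1 - F x) (Ioi 0) :=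
    hG.mono' hanti.measurable.aestronglyMeasurable <| Eventually.of_forall fun x => by
      rw [norm_of_nonneg (hpos x).le]
      exact le_exp_neg_mul_neg_log (hpos x) (hle_one x) hγ
  have hlong : IsLongTailed fun x => 1 - F x := hF_long
  refine ⟨hpos, hf, hlong.tendsto_intervalIntegral_mul_comp_sub_div hpos hanti hf
    (hG.const_mul (exp A')) (fun y => by positivity) fun x hx y hy => ?_⟩
  exact mul_le_mul_exp_of_neg_log_sub_le (hpos x) (hpos _) (hpos y) (hR x hx y hy)

/-- **Proposition 2** (part of Theorem 3.30 in Foss–Korshunov–Zachary).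
Let `F` be a long-tailed distribution function on the real line and `R(x) = -ln F̄(x)`.
If there are `γ < 1` and `A' < ∞` with `R(x) - R(x-y) ≤ γ R(y) + A'` for all `x > 0`
and `y ∈ [0, x/2]`, and `exp(-(1-γ) R(x))` is integrable over `[0, ∞)`, then `F ∈ 𝒮*`. -/
theorem strong_subexp_criterion
    (F : ℝ → ℝ)
    -- F is a distribution function on ℝ
    (hF_mono : Monotone F)
    (hF_top : Tendsto F atTop (nhds 1)) (hF_bot : Tendsto F atBot (nhds 0))
    -- right-unbounded support: F̄(x) > 0 for all x
    (hF_pos : ∀ x, F x < 1)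
    -- F is long-tailed
    (hF_long : Tendsto (fun x => (1 - F (x - 1)) / (1 - F x)) atTop (nhds 1))
    (γ A' : ℝ) (hγ : γ < 1)
    (hR : ∀ x > (0:ℝ), ∀ y ∈ Set.Icc (0:ℝ) (x / 2),
      (-Real.log (1 - F x)) - (-Real.log (1 - F (x - y))) ≤ γ * (-Real.log (1 - F y)) + A')
    (hint : IntegrableOn (fun x => Real.exp (-(1 - γ) * (-Real.log (1 - F x)))) (Set.Ici 0)) :
    IsStrongSubexp (fun x => 1 - F x) :=
  strong_subexp_criterion_general F hF_mono hF_top hF_bot hF_pos hF_long γ A' hR hint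
end

section
/- Let ξ, ξ₁, ξ₂, … be i.i.d. real random variables with E ξ = −a < 0, and let τ = min{n ≥ 1 : ξ₁ + … + ξ_n ≤ 0}. If E exp(λ ξ) < ∞ for some λ > 0, then there exists a constant c > 0 (depending on the distribution of ξ) such that E exp(c τ) < ∞. -/
open MeasureTheory ProbabilityTheory Filter Set Topology Real
open scoped ENNReal

/-!
The moment generating function `φ(t) = E exp(t ξ)` is finite on `[0, λ]`, equals `1` at `0`,
and has right derivative `E ξ < 0` there, so `φ(t) < 1` for some `t > 0`. Before `τ` the walk
stays positive, so Chernoff's bound and independence give `P(τ > n) ≤ P(S_n ≥ 0) ≤ φ(t)^n`,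
and a geometric tail yields `E exp(c τ) < ∞` as soon as `exp c · φ(t) < 1`.
-/

lemma exp_mul_sub_one_div_le_of_le (x : ℝ) {s t : ℝ} (ht : 0 < t) (hts : t ≤ s) :
    (exp (t * x) - 1) / t ≤ (exp (s * x) - 1) / s := by
  have hconv : ConvexOn ℝ univ fun u : ℝ => exp (u * x) :=
    convexOn_exp.comp_linearMap (LinearMap.id.smulRight x)
  simpa using hconv.secant_mono (mem_univ 0) (mem_univ t) (mem_univ s) ht.ne'
    (ht.trans_le hts).ne' hts

lemma le_exp_mul_sub_one_div (x : ℝ) {t : ℝ} (ht : 0 < t) : x ≤ (exp (t * x) - 1) / t := by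
  rw [le_div_iff₀ ht]
  linarith [add_one_le_exp (t * x)]

lemma tendsto_exp_mul_sub_one_div (x : ℝ) :
    Tendsto (fun t => (exp (t * x) - 1) / t) (𝓝[≠] 0) (𝓝 x) := by
  have := hasDerivAt_iff_tendsto_slope.1 (((hasDerivAt_id (0 : ℝ)).mul_const x).exp)
  simpa [slope_fun_def_field] using this

section

variable {Ω : Type*} [MeasurableSpace Ω] {μ : Measure Ω}

lemma tendsto_mgf_sub_one_div_nhdsGT [IsProbabilityMeasure μ] {X : Ω → ℝ}
    (hX : Integrable X μ) {s : ℝ} (hs : 0 < s)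
    (hexp : Integrable (fun ω => exp (s * X ω)) μ) :
    Tendsto (fun t => (mgf X μ t - 1) / t) (𝓝[>] 0) (𝓝 μ[X]) := by
  have hexp_of_mem : ∀ t ∈ Ioc 0 s, Integrable (fun ω => exp (t * X ω)) μ := fun t ht =>
    integrable_exp_mul_of_le_of_le (by simp) hexp ht.1.le ht.2
  have hIoc : ∀ᶠ t in 𝓝[>] (0 : ℝ), t ∈ Ioc 0 s := Ioc_mem_nhdsGT hs
  have hmgf : ∀ᶠ t in 𝓝[>] (0 : ℝ),
      ∫ ω, (exp (t * X ω) - 1) / t ∂μ = (mgf X μ t - 1) / t := by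
    filter_upwards [hIoc] with t ht
    rw [integral_div, integral_sub (hexp_of_mem t ht) (integrable_const 1)]
    simp [mgf]
  -- `0` need not be interior to the domain of the mgf, so instead of `hasDerivAt_mgf` we use
  -- that convexity traps each slope between `X` and the integrable slope at `s`.
  refine Tendsto.congr' hmgf (tendsto_integral_filter_of_dominated_convergence
    (fun ω => |X ω| + |(exp (s * X ω) - 1) / s|) ?_ ?_ ?_ ?_)
  · filter_upwards [hIoc] with t ht
    exact ((hexp_of_mem t ht).sub (integrable_const 1)).div_const t |>.aestronglyMeasurable
  · filter_upwards [hIoc] with t ht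
    refine ae_of_all _ fun ω => ?_
    have hlow := le_exp_mul_sub_one_div (X ω) ht.1
    have hup := exp_mul_sub_one_div_le_of_le (X ω) ht.1 ht.2
    rw [Real.norm_eq_abs, abs_le]
    constructor <;> linarith [neg_abs_le (X ω), le_abs_self ((exp (s * X ω) - 1) / s),
      abs_nonneg (X ω), abs_nonneg ((exp (s * X ω) - 1) / s)]
  · exact hX.abs.add ((hexp.sub (integrable_const 1)).div_const s).abs
  · exact ae_of_all _ fun ω =>
      (tendsto_exp_mul_sub_one_div (X ω)).mono_left (nhdsGT_le_nhdsNE 0)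

lemma exists_pos_mgf_lt_one [IsProbabilityMeasure μ] {X : Ω → ℝ} (hX : Integrable X μ)
    (hneg : μ[X] < 0) {s : ℝ} (hs : 0 < s)
    (hexp : Integrable (fun ω => exp (s * X ω)) μ) :
    ∃ t, 0 < t ∧ Integrable (fun ω => exp (t * X ω)) μ ∧ mgf X μ t < 1 := by
  have hIoc : ∀ᶠ t in 𝓝[>] (0 : ℝ), t ∈ Ioc 0 s := Ioc_mem_nhdsGT hs
  obtain ⟨t, ht, hslope⟩ := (hIoc.and
    ((tendsto_mgf_sub_one_div_nhdsGT hX hs hexp).eventually (gt_mem_nhds hneg))).exists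
  refine ⟨t, ht.1, integrable_exp_mul_of_le_of_le (by simp) hexp ht.1.le ht.2, ?_⟩
  by_contra! hge
  exact hslope.not_ge (div_nonneg (sub_nonneg.2 hge) ht.1.le)

lemma ProbabilityTheory.iIndepFun.measureReal_sum_range_nonneg_le_mgf_pow [IsFiniteMeasure μ]
    {ξ : ℕ → Ω → ℝ} (hmeas : ∀ i, Measurable (ξ i)) (hindep : iIndepFun ξ μ)
    (hident : ∀ i, IdentDistrib (ξ i) (ξ 0) μ μ) {t : ℝ} (ht : 0 ≤ t)
    (hexp : Integrable (fun ω => exp (t * ξ 0 ω)) μ) (n : ℕ) :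
    μ.real {ω | 0 ≤ ∑ i ∈ Finset.range n, ξ i ω} ≤ mgf (ξ 0) μ t ^ n := by
  have hexp_sum : Integrable (fun ω => exp (t * (∑ i ∈ Finset.range n, ξ i) ω)) μ :=
    hindep.integrable_exp_mul_sum hmeas fun i _ =>
      ((hident i).comp (measurable_const_mul t).exp).integrable_iff.2 hexp
  have hmgf : mgf (∑ i ∈ Finset.range n, ξ i) μ t = mgf (ξ 0) μ t ^ n := by
    rw [hindep.mgf_sum hmeas, Finset.prod_eq_pow_card
      fun i _ => mgf_congr_of_identDistrib _ _ (hident i) t, Finset.card_range]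
  simpa [hmgf] using measure_ge_le_exp_mul_mgf 0 ht hexp_sum

lemma integrable_pow_of_measureReal_lt_le_pow [IsFiniteMeasure μ] {N : Ω → ℕ}
    (hN : Measurable N) {r ρ : ℝ} (hr : 0 ≤ r) (hρ : 0 ≤ ρ) (hρr : ρ * r < 1)
    (htail : ∀ n, μ.real {ω | n < N ω} ≤ r ^ n) :
    Integrable (fun ω => ρ ^ N ω) μ := by
  have hlt : ∀ m, MeasurableSet {ω | m < N ω} := fun m => hN measurableSet_Ioi
  have hbound : ∀ ω, ENNReal.ofReal (ρ ^ N ω) ≤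
      1 + ∑' m, {ω | m < N ω}.indicator (fun _ => ENNReal.ofReal (ρ ^ (m + 1))) ω := by
    intro ω
    -- for `N ω = k + 1`, `ρ ^ N ω` is the `k`-th term of the series
    cases hk : N ω with
    | zero => simp
    | succ k =>
      calc ENNReal.ofReal (ρ ^ (k + 1))
          = {ω | k < N ω}.indicator (fun _ => ENNReal.ofReal (ρ ^ (k + 1))) ω := by
            rw [indicator_of_mem (by simp [hk])]
        _ ≤ _ := (ENNReal.le_tsum k).trans le_add_self
  have hterm : ∀ m : ℕ, ENNReal.ofReal (ρ ^ (m + 1)) * μ {ω | m < N ω} ≤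
      ENNReal.ofReal ρ * ENNReal.ofReal (ρ * r) ^ m := by
    intro m
    calc ENNReal.ofReal (ρ ^ (m + 1)) * μ {ω | m < N ω}
        ≤ ENNReal.ofReal (ρ ^ (m + 1)) * ENNReal.ofReal (r ^ m) := by
          gcongr
          exact (ENNReal.le_ofReal_iff_toReal_le (measure_ne_top _ _) (pow_nonneg hr m)).2
            (htail m)
      _ = ENNReal.ofReal ρ * ENNReal.ofReal (ρ * r) ^ m := by
          rw [← ENNReal.ofReal_mul (by positivity), ← ENNReal.ofReal_pow (by positivity),
            ← ENNReal.ofReal_mul hρ]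
          ring_nf
  refine ⟨by fun_prop, ?_⟩
  rw [hasFiniteIntegral_iff_ofReal (ae_of_all _ fun ω => pow_nonneg hρ _)]
  calc ∫⁻ ω, ENNReal.ofReal (ρ ^ N ω) ∂μ
      ≤ ∫⁻ ω, 1 + ∑' m,
          {ω | m < N ω}.indicator (fun _ => ENNReal.ofReal (ρ ^ (m + 1))) ω ∂μ :=
        lintegral_mono hbound
    _ = μ univ + ∑' m : ℕ, ENNReal.ofReal (ρ ^ (m + 1)) * μ {ω | m < N ω} := by
        rw [lintegral_add_left measurable_const, lintegral_const, one_mul,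
          lintegral_tsum fun m => (measurable_const.indicator (hlt m)).aemeasurable]
        simp_rw [lintegral_indicator_const (hlt _)]
    _ ≤ μ univ + ∑' m : ℕ, ENNReal.ofReal ρ * ENNReal.ofReal (ρ * r) ^ m :=
        add_le_add_right (ENNReal.tsum_le_tsum hterm) _
    _ = μ univ + ENNReal.ofReal ρ * (1 - ENNReal.ofReal (ρ * r))⁻¹ := by
        rw [ENNReal.tsum_mul_left, ENNReal.tsum_geometric]
    _ < ⊤ := by
        refine ENNReal.add_lt_top.2
          ⟨measure_lt_top _ _, ENNReal.mul_lt_top ENNReal.ofReal_lt_top ?_⟩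
        rw [ENNReal.inv_lt_top, tsub_pos_iff_lt, ENNReal.ofReal_lt_one]
        exact hρr

lemma exists_integrable_exp_mul_of_measureReal_lt_le_pow [IsFiniteMeasure μ] {N : Ω → ℕ}
    (hN : Measurable N) {r : ℝ} (hr0 : 0 ≤ r) (hr1 : r < 1)
    (htail : ∀ n, μ.real {ω | n < N ω} ≤ r ^ n) :
    ∃ c, 0 < c ∧ Integrable (fun ω => exp (c * N ω)) μ := by
  have hρ : 0 < 2 / (1 + r) := by positivity
  refine ⟨log (2 / (1 + r)), log_pos ((one_lt_div (by positivity)).2 (by linarith)), ?_⟩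
  have hρr : 2 / (1 + r) * r < 1 := by
    rw [div_mul_eq_mul_div, div_lt_one (by positivity)]
    linarith
  simpa [mul_comm (log _), exp_nat_mul, exp_log hρ] using
    integrable_pow_of_measureReal_lt_le_pow hN hr0 hρ.le hρr htail

lemma sum_range_nonneg_of_lt_sInf {x : ℕ → ℝ} {n : ℕ}
    (h : n < sInf {k | 1 ≤ k ∧ ∑ i ∈ Finset.range k, x i ≤ 0}) :
    0 ≤ ∑ i ∈ Finset.range n, x i := by
  by_contra! hneg
  have hn : 1 ≤ n := Nat.one_le_iff_ne_zero.2 fun h0 => by simp [h0] at hneg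
  exact Nat.notMem_of_lt_sInf h ⟨hn, hneg.le⟩

lemma measurable_sInf_setOf {p : ℕ → Ω → Prop}
    (hp : ∀ k, MeasurableSet {ω | p k ω}) : Measurable fun ω => sInf {k | p k ω} := by
  refine measurable_of_Ioi fun n => ?_
  have hlt : ∀ A : Set ℕ, n < sInf A ↔ A.Nonempty ∧ ∀ k ≤ n, k ∉ A := fun A =>
    ⟨fun h => ⟨Nat.nonempty_of_pos_sInf (n.zero_le.trans_lt h),
      fun k hk => Nat.notMem_of_lt_sInf (hk.trans_lt h)⟩,
     fun ⟨hne, hA⟩ => lt_of_not_ge fun hle => hA _ hle (Nat.sInf_mem hne)⟩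
  have hpre : (fun ω => sInf {k | p k ω}) ⁻¹' Ioi n =
      (⋃ k, {ω | p k ω}) ∩ ⋂ k ≤ n, {ω | p k ω}ᶜ := by
    ext ω
    simp [hlt, Set.Nonempty]
  rw [hpre]
  exact (MeasurableSet.iUnion hp).inter
    (MeasurableSet.biInter (to_countable _) fun k _ => (hp k).compl)

end

/-- **Exponential moments of the first descending ladder epoch.**
If `E exp(λ ξ) < ∞` for some `λ > 0`, then there is `c > 0` (depending on the
distribution of `ξ`) such that `E exp(c τ) < ∞`. -/
theorem ladder_epoch_exponential_moment
    {Ω : Type*} [MeasurableSpace Ω] {μ : Measure Ω} [IsProbabilityMeasure μ]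
    (ξ : ℕ → Ω → ℝ) (hmeas : ∀ i, Measurable (ξ i))
    (hindep : iIndepFun ξ μ)
    (hident : ∀ i, IdentDistrib (ξ i) (ξ 0) μ μ)
    (a : ℝ) (ha : 0 < a)
    (hint : Integrable (ξ 0) μ) (hmean : ∫ ω, ξ 0 ω ∂μ = -a)
    (lam : ℝ) (hlam : 0 < lam)
    (hmom : Integrable (fun ω => Real.exp (lam * ξ 0 ω)) μ)
    (τ : Ω → ℕ)
    (hτ : ∀ ω, τ ω = sInf {n : ℕ | 1 ≤ n ∧ ∑ i ∈ Finset.range n, ξ i ω ≤ 0}) :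
    ∃ c : ℝ, 0 < c ∧ Integrable (fun ω => Real.exp (c * (τ ω : ℝ))) μ := by
  obtain ⟨t, ht, hexp_t, hmgf_lt_one⟩ :=
    exists_pos_mgf_lt_one hint (by rw [hmean]; linarith) hlam hmom
  have hτ_meas : Measurable τ := by
    rw [funext hτ]
    exact measurable_sInf_setOf fun k =>
      (MeasurableSet.const _).inter
        (measurableSet_le (Finset.measurable_sum _ fun i _ => hmeas i) measurable_const)
  have htail : ∀ n, μ.real {ω | n < τ ω} ≤ mgf (ξ 0) μ t ^ n := fun n =>
    (measureReal_mono fun ω (hω : n < τ ω) =>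
        sum_range_nonneg_of_lt_sInf (hτ ω ▸ hω)).trans
      (hindep.measureReal_sum_range_nonneg_le_mgf_pow hmeas hident ht.le hexp_t n)
  exact exists_integrable_exp_mul_of_measureReal_lt_le_pow hτ_meas mgf_nonneg hmgf_lt_one htail
end

section
/- Let α > 1 and define g(x) = (log max(x, 1))^α for x ∈ ℝ. Then: g is nondecreasing; g is differentiable on (1, ∞) with g′(x) → 0 as x → ∞; there exists γ ∈ (0,1) such that ∫₁^∞ exp(−(1−γ) g(x)) dx < ∞; and there exist constants x₀ > 0 and A > 0 such that g(x) − g(x−y) ≤ γ g(y) + A for all x, y with x₀ < y ≤ x/2. -/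
/-!
Write `g = logPow α`. Convexity of `t ↦ t ^ α` and `log x - log (x - y) ≤ 2y/x` give
`g x - g (x - y) ≤ α (log x) ^ (α - 1) · 2y/x` for `1 ≤ y ≤ x/2`. If `y ≤ √x`, the factor
`2y/x ≤ 2/√x` absorbs `(log x) ^ (α - 1) = O(√x)`, leaving a constant. If `y > √x`, then
`log x < 2 log y` and `2y/x ≤ 1`, and `(log x) ^ (α - 1)` is at most a constant plus an
arbitrarily small multiple of `(log x) ^ α ≤ 2 ^ α g y`. Integrability holds for every `γ < 1`:
since `(log x) ^ (α - 1) → ∞`, eventually `exp (-(1 - γ) g x) ≤ x⁻²`.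
-/

open MeasureTheory Filter Set Real

theorem rpow_sub_rpow_le_mul_sub {α a b : ℝ} (hα : 1 ≤ α) (hb : 0 ≤ b) (hba : b ≤ a) :
    a ^ α - b ^ α ≤ α * a ^ (α - 1) * (a - b) := by
  rcases hba.eq_or_lt with rfl | hlt
  · simp
  have hslope := (convexOn_rpow hα).slope_le_of_hasDerivAt hb (hb.trans hba) hlt
    (hasDerivAt_rpow_const (Or.inr hα))
  rwa [slope_def_field, div_le_iff₀ (sub_pos.2 hlt)] at hslope

theorem rpow_le_rpow_add_rpow_add_one_div {p t T : ℝ} (hp : 0 ≤ p) (ht : 0 ≤ t) (hT : 0 < T) :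
    t ^ p ≤ T ^ p + t ^ (p + 1) / T := by
  rcases le_or_gt t T with htT | hTt
  · have := rpow_le_rpow ht htT hp
    have : 0 ≤ t ^ (p + 1) / T := by positivity
    linarith
  · have : t ^ p ≤ t ^ (p + 1) / T := by
      rw [rpow_add_one (hT.trans hTt).ne', le_div_iff₀ hT]
      exact mul_le_mul_of_nonneg_left hTt.le (by positivity)
    linarith [rpow_nonneg hT.le p]

theorem log_sub_log_sub_le {x y : ℝ} (hy : 0 ≤ y) (hx : 0 < x) (hyx : y ≤ x / 2) :
    log x - log (x - y) ≤ 2 * y / x := by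
  have hxy : 0 < x - y := by linarith
  calc log x - log (x - y) = log (x / (x - y)) := (log_div hx.ne' hxy.ne').symm
    _ ≤ x / (x - y) - 1 := log_le_sub_one_of_pos (by positivity)
    _ = y / (x - y) := by field_simp; ring
    _ ≤ 2 * y / x := by rw [div_le_div_iff₀ hxy hx]; nlinarith

theorem log_rpow_le_mul_sqrt {p x : ℝ} (hp : 0 < p) (hx : 1 ≤ x) :
    log x ^ p ≤ (2 * p) ^ p * √x := by
  have hε : 0 < (2 * p)⁻¹ := by positivity
  calc log x ^ p ≤ (x ^ (2 * p)⁻¹ / (2 * p)⁻¹) ^ p :=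
        rpow_le_rpow (log_nonneg hx) (log_le_rpow_div (by linarith) hε) hp.le
    _ = (2 * p) ^ p * √x := by
        rw [div_inv_eq_mul, mul_rpow (by positivity) (by positivity), ← rpow_mul (by linarith),
          show (2 * p)⁻¹ * p = 1 / 2 by field_simp, sqrt_eq_rpow, mul_comm]

theorem log_rpow_mul_div_le_of_sq_le {p x y : ℝ} (hp : 0 < p) (hx : 1 ≤ x) (hy : 0 ≤ y)
    (hyx : y ^ 2 ≤ x) : log x ^ p * (y / x) ≤ (2 * p) ^ p := by
  calc log x ^ p * (y / x) ≤ (2 * p) ^ p * √x * (√x / x) := by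
        gcongr
        · exact log_rpow_le_mul_sqrt hp hx
        · exact (le_sqrt hy (by linarith)).2 hyx
    _ = (2 * p) ^ p := by
        field_simp
        exact sq_sqrt (by linarith)

noncomputable def logPow (α x : ℝ) : ℝ := log (max x 1) ^ α

theorem logPow_of_one_le {α x : ℝ} (hx : 1 ≤ x) : logPow α x = log x ^ α := by
  rw [logPow, max_eq_left hx]

theorem logPow_nonneg (α x : ℝ) : 0 ≤ logPow α x :=
  rpow_nonneg (log_nonneg (le_max_right _ _)) _

theorem continuous_logPow {α : ℝ} (hα : 0 ≤ α) : Continuous (logPow α) :=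
  (continuous_id.max continuous_const).log (fun x => by positivity) |>.rpow_const
    fun _ => Or.inr hα

theorem monotone_logPow {α : ℝ} (hα : 0 ≤ α) : Monotone (logPow α) := fun _ _ hab =>
  rpow_le_rpow (log_nonneg (le_max_right _ _))
    (log_le_log (by positivity) (max_le_max hab le_rfl)) hα

theorem hasDerivAt_logPow {α x : ℝ} (hα : 1 ≤ α) (hx : 1 < x) :
    HasDerivAt (logPow α) (α * log x ^ (α - 1) * x⁻¹) x := by
  have h := (hasDerivAt_rpow_const (p := α) (Or.inr hα)).comp x (hasDerivAt_log (by positivity))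
  refine h.congr_of_eventuallyEq ?_
  filter_upwards [eventually_gt_nhds hx] with t ht using logPow_of_one_le ht.le

theorem tendsto_deriv_logPow_atTop {α : ℝ} (hα : 1 ≤ α) :
    Tendsto (deriv (logPow α)) atTop (nhds 0) := by
  have hderiv : (fun x => α * (log x ^ (α - 1) / x ^ (1 : ℝ))) =ᶠ[atTop] deriv (logPow α) := by
    filter_upwards [eventually_gt_atTop 1] with x hx
    rw [(hasDerivAt_logPow hα hx).deriv, rpow_one, div_eq_mul_inv, mul_assoc]
  simpa using
    ((isLittleO_log_rpow_rpow_atTop (α - 1) one_pos).tendsto_div_nhds_zero.const_mul α).congr'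
      hderiv

theorem exp_neg_mul_logPow_isBigO_rpow {α c : ℝ} (hα : 1 < α) (hc : 0 < c) (s : ℝ) :
    (fun x => exp (-c * logPow α x)) =O[atTop] fun x => x ^ (-s) := by
  have hgrowth : Tendsto (fun x => c * log x ^ (α - 1)) atTop atTop :=
    ((tendsto_rpow_atTop (by linarith)).comp tendsto_log_atTop).const_mul_atTop hc
  refine Asymptotics.IsBigO.of_bound 1 ?_
  filter_upwards [hgrowth.eventually_ge_atTop s, eventually_gt_atTop 1] with x hs hx
  have hlog : 0 < log x := log_pos hx
  have hpow : log x ^ α = log x ^ (α - 1) * log x := by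
    rw [← rpow_add_one hlog.ne']; ring_nf
  rw [norm_of_nonneg (exp_pos _).le, norm_of_nonneg (by positivity), one_mul,
    rpow_def_of_pos (by linarith), logPow_of_one_le hx.le, exp_le_exp, hpow]
  nlinarith

theorem integrableOn_exp_neg_mul_logPow {α c : ℝ} (hα : 1 < α) (hc : 0 < c) :
    IntegrableOn (fun x => exp (-c * logPow α x)) (Ici 1) := by
  have hcont : Continuous fun x => exp (-c * logPow α x) :=
    continuous_exp.comp ((continuous_logPow (by linarith)).const_mul _)
  exact (hcont.locallyIntegrable.locallyIntegrableOn _).integrableOn_of_isBigO_atTop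
    (exp_neg_mul_logPow_isBigO_rpow hα hc 2) (integrableAtFilter_rpow_atTop_iff.2 (by norm_num))

theorem logPow_sub_logPow_sub_le {α x y : ℝ} (hα : 1 ≤ α) (hy : 1 ≤ y) (hyx : y ≤ x / 2) :
    logPow α x - logPow α (x - y) ≤ α * log x ^ (α - 1) * (2 * y / x) := by
  have hxy : 1 ≤ x - y := by linarith
  have hlog : log (x - y) ≤ log x := log_le_log (by linarith) (by linarith)
  rw [logPow_of_one_le (by linarith), logPow_of_one_le hxy]
  calc log x ^ α - log (x - y) ^ α ≤ α * log x ^ (α - 1) * (log x - log (x - y)) :=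
        rpow_sub_rpow_le_mul_sub hα (log_nonneg hxy) hlog
    _ ≤ α * log x ^ (α - 1) * (2 * y / x) := by
        gcongr
        · exact mul_nonneg (by linarith) (rpow_nonneg (log_nonneg (by linarith)) _)
        · exact log_sub_log_sub_le (by linarith) (by linarith) hyx

theorem mul_log_rpow_sub_one_le_of_lt_sq {α γ x y : ℝ} (hα : 1 ≤ α) (hγ : 0 < γ) (hx : 1 ≤ x)
    (hy : 1 ≤ y) (hxy : x < y ^ 2) :
    α * log x ^ (α - 1) ≤ γ * logPow α y + α * (α * 2 ^ α / γ) ^ (α - 1) := by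
  set T := α * 2 ^ α / γ
  have hT : 0 < T := by positivity
  have hlogx : 0 ≤ log x := log_nonneg hx
  have hlog : log x ≤ 2 * log y := by
    rw [← log_rpow (by linarith)]
    exact log_le_log (by linarith) (by exact_mod_cast hxy.le)
  have hpow : log x ^ α ≤ 2 ^ α * logPow α y := by
    rw [logPow_of_one_le hy, ← mul_rpow (by norm_num) (log_nonneg hy)]
    exact rpow_le_rpow hlogx hlog (by linarith)
  have hsplit := rpow_le_rpow_add_rpow_add_one_div (sub_nonneg.2 hα) hlogx hT
  rw [sub_add_cancel] at hsplit
  calc α * log x ^ (α - 1) ≤ α * (T ^ (α - 1) + 2 ^ α * logPow α y / T) := by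
        gcongr; exact hsplit.trans (by gcongr)
    _ = α * 2 ^ α / T * logPow α y + α * T ^ (α - 1) := by ring
    _ = γ * logPow α y + α * T ^ (α - 1) := by simp only [T]; field_simp

theorem exists_logPow_sub_logPow_sub_le {α γ : ℝ} (hα : 1 < α) (hγ : 0 < γ) :
    ∃ x₀ > (0 : ℝ), ∃ A > (0 : ℝ), ∀ x y : ℝ, x₀ < y → y ≤ x / 2 →
      logPow α x - logPow α (x - y) ≤ γ * logPow α y + A := by
  set K := (2 * (α - 1)) ^ (α - 1)
  set B := α * (α * 2 ^ α / γ) ^ (α - 1)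
  -- `2 * α * K` bounds the increment when `y ^ 2 ≤ x`, and `B` the excess over `γ * g y` otherwise
  refine ⟨1, one_pos, 2 * α * K + B, by positivity, fun x y hy hyx => ?_⟩
  have hx : 1 ≤ x := by linarith
  have hdiff := logPow_sub_logPow_sub_le hα.le hy.le hyx
  have hK : 0 ≤ 2 * α * K := by positivity
  have hB : 0 ≤ B := by positivity
  have hγy := mul_nonneg hγ.le (logPow_nonneg α y)
  rcases le_or_gt (y ^ 2) x with hsmall | hlarge
  · have hbound := log_rpow_mul_div_le_of_sq_le (sub_pos.2 hα) hx (by linarith) hsmall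
    calc logPow α x - logPow α (x - y) ≤ α * log x ^ (α - 1) * (2 * y / x) := hdiff
      _ = 2 * α * (log x ^ (α - 1) * (y / x)) := by ring
      _ ≤ 2 * α * K := by gcongr
      _ ≤ γ * logPow α y + (2 * α * K + B) := by linarith
  · have hstep : 2 * y / x ≤ 1 := (div_le_one (by linarith)).2 (by linarith)
    calc logPow α x - logPow α (x - y) ≤ α * log x ^ (α - 1) * (2 * y / x) := hdiff
      _ ≤ α * log x ^ (α - 1) :=
          mul_le_of_le_one_right (mul_nonneg (by linarith) (rpow_nonneg (log_nonneg hx) _)) hstep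
      _ ≤ γ * logPow α y + B := mul_log_rpow_sub_one_le_of_lt_sq hα.le hγ hx hy.le hlarge
      _ ≤ γ * logPow α y + (2 * α * K + B) := by linarith

/-- **Example, function `g₁(x) = (log max(x,1))^α`, `α > 1`,** satisfies the substance
of conditions (C1)–(C3). -/
theorem g_log_pow_satisfies_conditions (α : ℝ) (hα : 1 < α) :
    Monotone (fun x : ℝ => Real.log (max x 1) ^ α) ∧
    (∀ x ∈ Set.Ioi (1:ℝ),
      DifferentiableAt ℝ (fun x : ℝ => Real.log (max x 1) ^ α) x) ∧
    Tendsto (deriv (fun x : ℝ => Real.log (max x 1) ^ α)) atTop (nhds 0) ∧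
    ∃ γ ∈ Set.Ioo (0:ℝ) 1,
      IntegrableOn
        (fun x : ℝ => Real.exp (-(1 - γ) * Real.log (max x 1) ^ α)) (Set.Ici 1) ∧
      ∃ x₀ > (0:ℝ), ∃ A > (0:ℝ), ∀ x y : ℝ, x₀ < y → y ≤ x / 2 →
        Real.log (max x 1) ^ α - Real.log (max (x - y) 1) ^ α
          ≤ γ * Real.log (max y 1) ^ α + A :=
  ⟨monotone_logPow (by linarith), fun _ hx => (hasDerivAt_logPow hα.le hx).differentiableAt,
    tendsto_deriv_logPow_atTop hα.le, 1 / 2, ⟨by norm_num, by norm_num⟩,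
    integrableOn_exp_neg_mul_logPow hα (by norm_num),
    exists_logPow_sub_logPow_sub_le hα (by norm_num)⟩
end

section
/- Let β ∈ (0,1) and define g(x) = (max(x, 0))^β · log(max(x, 1)) for x ∈ ℝ. Then: g is nondecreasing; g is differentiable on (1, ∞) with g′(x) → 0 as x → ∞; there exists γ ∈ (0,1) such that ∫₁^∞ exp(−(1−γ) g(x)) dx < ∞; and there exist constants x₀ > 0 and A > 0 such that g(x) − g(x−y) ≤ γ g(y) + A for all x, y with x₀ < y ≤ x/2. -/
open MeasureTheory Filter Set Real Topology

/-! On `[1, ∞)` the function is `g x = x ^ β * log x`, with derivative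
`g' x = (β * log x + 1) / x ^ (1 - β)`, which tends to `0` and is antitone beyond
`exp (1 - β)⁻¹`. Integrability of `exp (-c g)` holds because `exp (-c g x) = x ^ (-c x ^ β)`
is eventually below `x ^ (-2)`. For the subadditivity-type bound, the mean value theorem on
`[x - y, x]` together with `y ≤ x - y` and the monotonicity of `g'` gives
`g x - g (x - y) ≤ y g' y = y ^ β (β log y + 1)`, and the extra `y ^ β` is absorbed into
`(1 - β) / 2 * g y` once `log y ≥ 2 / (1 - β)`. -/

noncomputable def weibullLog (β x : ℝ) : ℝ := max x 0 ^ β * log (max x 1)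

variable {β x y z : ℝ}

lemma weibullLog_of_one_le (hx : 1 ≤ x) : weibullLog β x = x ^ β * log x := by
  rw [weibullLog, max_eq_left (zero_le_one.trans hx), max_eq_left hx]

lemma monotone_weibullLog (hβ : 0 ≤ β) : Monotone (weibullLog β) :=
  Monotone.mul (f := fun x => max x 0 ^ β) (g := fun x => log (max x 1))
    (fun _ _ hab => rpow_le_rpow (le_max_right _ _) (max_le_max_right 0 hab) hβ)
    (fun _ _ hab => log_le_log (by positivity) (max_le_max_right 1 hab))
    (fun _ => rpow_nonneg (le_max_right _ _) _) (fun _ => log_nonneg (le_max_right _ _))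

lemma continuous_weibullLog (hβ : 0 ≤ β) : Continuous (weibullLog β) :=
  ((continuous_id.max continuous_const).rpow_const fun _ => Or.inr hβ).mul
    ((continuous_id.max continuous_const).log fun x =>
      (zero_lt_one.trans_le (le_max_right x 1)).ne')

lemma hasDerivAt_weibullLog (hx : 1 < x) :
    HasDerivAt (weibullLog β) ((β * log x + 1) / x ^ (1 - β)) x := by
  have hx0 : 0 < x := one_pos.trans hx
  have hg : weibullLog β =ᶠ[𝓝 x] fun t => t ^ β * log t :=
    (eventually_gt_nhds hx).mono fun _ ht => weibullLog_of_one_le ht.le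
  refine (((hasDerivAt_rpow_const (Or.inl hx0.ne')).mul (hasDerivAt_log hx0.ne')).congr_deriv
    ?_).congr_of_eventuallyEq hg
  have hxβ : x ^ β ≠ 0 := (rpow_pos_of_pos hx0 β).ne'
  rw [rpow_sub hx0, rpow_sub hx0, rpow_one]
  field_simp

lemma tendsto_deriv_weibullLog_atTop (hβ : β < 1) :
    Tendsto (deriv (weibullLog β)) atTop (𝓝 0) := by
  have h1β : 0 < 1 - β := sub_pos.2 hβ
  have hlim := ((isLittleO_log_rpow_atTop h1β).tendsto_div_nhds_zero.const_mul β).add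
    (tendsto_rpow_atTop h1β).inv_tendsto_atTop
  rw [mul_zero, zero_add] at hlim
  refine hlim.congr' ?_
  filter_upwards [eventually_gt_atTop 1] with x hx
  rw [(hasDerivAt_weibullLog hx).deriv, add_div, mul_div_assoc, one_div, Pi.inv_apply]

lemma antitoneOn_deriv_weibullLog (hβ0 : 0 ≤ β) (hβ1 : β < 1) :
    AntitoneOn (deriv (weibullLog β)) (Ici (exp (1 - β)⁻¹)) := by
  have h1β : 0 < 1 - β := sub_pos.2 hβ1
  intro s hs t ht hst
  have hs1 : 1 < s := (one_lt_exp_iff.2 (inv_pos.2 h1β)).trans_le hs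
  rw [(hasDerivAt_weibullLog hs1).deriv, (hasDerivAt_weibullLog (hs1.trans_le hst)).deriv,
    add_div, add_div, mul_div_assoc, mul_div_assoc]
  gcongr ?_ + ?_
  · exact mul_le_mul_of_nonneg_left (log_div_self_rpow_antitoneOn h1β hs ht hst) hβ0
  · have hs0 : 0 < s := one_pos.trans hs1
    gcongr

lemma weibullLog_add_sub_le (hβ0 : 0 ≤ β) (hβ1 : β < 1) (hy : exp (1 - β)⁻¹ ≤ y)
    (hyz : y ≤ z) : weibullLog β (z + y) - weibullLog β z ≤ y ^ β * (β * log y + 1) := by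
  have hy1 : 1 < y := (one_lt_exp_iff.2 (inv_pos.2 (sub_pos.2 hβ1))).trans_le hy
  have hy0 : 0 < y := one_pos.trans hy1
  have hdiff : DifferentiableOn ℝ (weibullLog β) (interior (Ici z)) := by
    rw [interior_Ici]
    exact fun t ht => (hasDerivAt_weibullLog
      (hy1.trans_le (hyz.trans ht.le))).differentiableAt.differentiableWithinAt
  have hderiv : ∀ t ∈ interior (Ici z), deriv (weibullLog β) t ≤ deriv (weibullLog β) y := by
    rw [interior_Ici]
    exact fun t ht => antitoneOn_deriv_weibullLog hβ0 hβ1 hy (hy.trans (hyz.trans ht.le))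
      (hyz.trans ht.le)
  calc weibullLog β (z + y) - weibullLog β z ≤ deriv (weibullLog β) y * (z + y - z) :=
        (convex_Ici z).image_sub_le_mul_sub_of_deriv_le (continuous_weibullLog hβ0).continuousOn
          hdiff hderiv z self_mem_Ici (z + y) (by simp [hy0.le]) (by linarith)
    _ = y ^ β * (β * log y + 1) := by
        have hyβ : y ^ β ≠ 0 := (rpow_pos_of_pos hy0 β).ne'
        rw [(hasDerivAt_weibullLog hy1).deriv, add_sub_cancel_left, rpow_sub hy0, rpow_one]
        field_simp

lemma weibullLog_sub_le_of_le_half (hβ0 : 0 ≤ β) (hβ1 : β < 1) (hy : exp (2 / (1 - β)) ≤ y)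
    (hyx : y ≤ x / 2) :
    weibullLog β x - weibullLog β (x - y) ≤ (1 + β) / 2 * weibullLog β y := by
  have h1β : 0 < 1 - β := sub_pos.2 hβ1
  have hy0 : 0 < y := (exp_pos _).trans_le hy
  have hlog : 1 ≤ (1 - β) / 2 * log y := by
    have := (le_log_iff_exp_le hy0).2 hy
    rw [div_le_iff₀ h1β] at this
    linarith
  have hy' : exp (1 - β)⁻¹ ≤ y := (exp_le_exp.2 (by rw [inv_eq_one_div]; gcongr; norm_num)).trans hy
  have hmvt := weibullLog_add_sub_le hβ0 hβ1 hy' (show y ≤ x - y by linarith)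
  rw [sub_add_cancel] at hmvt
  rw [weibullLog_of_one_le (one_le_exp (by positivity) |>.trans hy)]
  nlinarith [rpow_nonneg hy0.le β]

lemma integrableOn_exp_neg_mul_weibullLog {c : ℝ} (hβ : 0 < β) (hc : 0 < c) (a : ℝ) :
    IntegrableOn (fun x => exp (-c * weibullLog β x)) (Ici a) := by
  have hcont : Continuous fun x => exp (-c * weibullLog β x) :=
    continuous_exp.comp ((continuous_weibullLog hβ.le).const_mul (-c))
  refine (hcont.continuousOn.locallyIntegrableOn measurableSet_Ici).integrableOn_of_isBigO_atTop
    (g := fun x => x ^ (-2 : ℝ)) (Asymptotics.IsBigO.of_bound 1 ?_)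
    (integrableAtFilter_rpow_atTop_iff.2 (by norm_num))
  filter_upwards [((tendsto_rpow_atTop hβ).const_mul_atTop hc).eventually_ge_atTop 2,
    eventually_ge_atTop 1] with x hcx hx
  have hx0 : 0 < x := one_pos.trans_le hx
  rw [one_mul, norm_of_nonneg (exp_pos _).le, norm_of_nonneg (rpow_nonneg hx0.le _),
    weibullLog_of_one_le hx, rpow_def_of_pos hx0 (-2)]
  exact exp_le_exp.2 (by nlinarith [mul_nonneg (sub_nonneg.2 hcx) (log_nonneg hx)])

/-- **Example, function `g₃(x) = (x⁺)^β log(max(x,1))`, `β ∈ (0,1)`,** satisfies the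
substance of conditions (C1)–(C3). -/
theorem g_weibull_log_satisfies_conditions (β : ℝ) (hβ : β ∈ Set.Ioo (0:ℝ) 1) :
    Monotone (fun x : ℝ => max x 0 ^ β * Real.log (max x 1)) ∧
    (∀ x ∈ Set.Ioi (1:ℝ),
      DifferentiableAt ℝ (fun x : ℝ => max x 0 ^ β * Real.log (max x 1)) x) ∧
    Tendsto (deriv (fun x : ℝ => max x 0 ^ β * Real.log (max x 1))) atTop (nhds 0) ∧
    ∃ γ ∈ Set.Ioo (0:ℝ) 1,
      IntegrableOn
        (fun x : ℝ => Real.exp (-(1 - γ) * (max x 0 ^ β * Real.log (max x 1))))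
        (Set.Ici 1) ∧
      ∃ x₀ > (0:ℝ), ∃ A > (0:ℝ), ∀ x y : ℝ, x₀ < y → y ≤ x / 2 →
        max x 0 ^ β * Real.log (max x 1) - max (x - y) 0 ^ β * Real.log (max (x - y) 1)
          ≤ γ * (max y 0 ^ β * Real.log (max y 1)) + A := by
  obtain ⟨hβ0, hβ1⟩ := hβ
  refine ⟨monotone_weibullLog hβ0.le, fun x hx => (hasDerivAt_weibullLog hx).differentiableAt,
    tendsto_deriv_weibullLog_atTop hβ1, (1 + β) / 2, ⟨by linarith, by linarith⟩,
    integrableOn_exp_neg_mul_weibullLog hβ0 (by linarith) 1, exp (2 / (1 - β)), exp_pos _,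
    1, one_pos, fun x y hy hyx => ?_⟩
  exact le_add_of_le_of_nonneg (weibullLog_sub_le_of_le_half hβ0.le hβ1 hy.le hyx) zero_le_one
end

section
/- Let g satisfy conditions (C1)–(C3) with constants γ ∈ (0,1), x₀ > 0, A > 0, and suppose in addition that B > 0 satisfies g′(x) < B for all x > x₀. Let K ≥ exp(g(x₀)) and define the tail function H̄(x) = min(1, K exp(−g(x))) and R(x) = −ln H̄(x). Then there exists a constant A′ < ∞ such that R(x) − R(x−y) ≤ γ R(y) + A′ for all x > 0 and all y ∈ [0, x/2]; in fact any A′ ≥ max(g(2x₁) − ln K, B x₁, A + γ ln K) works, where x₁ = inf{x : H̄(x) < 1}. -/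
open Filter Set

/-- **Verification of the hazard-rate condition for the upper-bound tail.**
Let `g` satisfy (C1)–(C3) with constants `γ ∈ (0,1)`, `x₀ > 0`, `A > 0`, let `B > 0`
bound `g'` on `(x₀, ∞)`, and let `K ≥ exp(g(x₀))`.  With `H̄(x) = min(1, K exp(-g x))`,
`R(x) = -ln H̄(x)` and `x₁ = inf{x : H̄(x) < 1}`, there is `A' < ∞` such that
`R(x) - R(x-y) ≤ γ R(y) + A'` for all `x > 0`, `y ∈ [0, x/2]`; in fact any
`A' ≥ max(g(2x₁) - ln K, B x₁, A + γ ln K)` works. -/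
theorem hazard_condition_for_upper_bound
    (g : ℝ → ℝ) (γ x₀ A B : ℝ)
    -- condition (C1)
    (hg_pos : ∀ x, 0 < g x) (hg_mono : StrictMono g) (hg_diff : Differentiable ℝ g)
    -- condition (C2)
    (hg_deriv : Tendsto (deriv g) atTop (nhds 0))
    -- condition (C3)
    (hγ : γ ∈ Set.Ioo (0:ℝ) 1)
    (hg_int : MeasureTheory.IntegrableOn
      (fun x => Real.exp (-(1 - γ) * g x)) (Set.Ici 1))
    (hx₀ : 0 < x₀) (hA : 0 < A)
    (hg_C3 : ∀ x y : ℝ, x₀ < y → y ≤ x / 2 → g x - g (x - y) ≤ γ * g y + A)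
    -- bound on the derivative
    (hB : 0 < B) (hg_B : ∀ x, x₀ < x → deriv g x < B)
    (K : ℝ) (hK : Real.exp (g x₀) ≤ K) :
    -- H̄, R and x₁:
    let Hbar : ℝ → ℝ := fun x => min 1 (K * Real.exp (-g x))
    let R : ℝ → ℝ := fun x => -Real.log (Hbar x)
    let x₁ : ℝ := sInf {x | Hbar x < 1}
    (∃ A' : ℝ, ∀ x > (0:ℝ), ∀ y ∈ Set.Icc (0:ℝ) (x / 2),
        R x - R (x - y) ≤ γ * R y + A') ∧
      ∀ A' : ℝ, max (max (g (2 * x₁) - Real.log K) (B * x₁)) (A + γ * Real.log K) ≤ A' →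
        ∀ x > (0:ℝ), ∀ y ∈ Set.Icc (0:ℝ) (x / 2),
          R x - R (x - y) ≤ γ * R y + A' := by
  intro Hbar R x₁
  have hK0 : (0:ℝ) < K := lt_of_lt_of_le (Real.exp_pos _) hK
  set L := Real.log K with hLdef
  have hgx₀L : g x₀ ≤ L := by
    have := (Real.le_log_iff_exp_le hK0).mpr hK
    exact this
  have hL0 : 0 < L := lt_of_lt_of_le (hg_pos x₀) hgx₀L
  -- R t = max 0 (g t - L)
  have hR : ∀ t, R t = max 0 (g t - L) := by
    intro t
    simp only [R, Hbar]
    rcases le_total 1 (K * Real.exp (-g t)) with h | h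
    · have hEK : Real.exp (g t) ≤ K := by
        have h' := mul_le_mul_of_nonneg_left h (Real.exp_pos (g t)).le
        rw [mul_one] at h'
        calc Real.exp (g t) ≤ Real.exp (g t) * (K * Real.exp (-g t)) := h'
          _ = K := by rw [Real.exp_neg]; field_simp
      have htL : g t ≤ L := (Real.le_log_iff_exp_le hK0).mpr hEK
      rw [min_eq_left h, Real.log_one, neg_zero,
        max_eq_left (sub_nonpos.mpr htL)]
    · have hKE : K ≤ Real.exp (g t) := by
        have h' := mul_le_mul_of_nonneg_left h (Real.exp_pos (g t)).le
        rw [mul_one] at h'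
        calc K = Real.exp (g t) * (K * Real.exp (-g t)) := by
              rw [Real.exp_neg]; field_simp
          _ ≤ Real.exp (g t) := h'
      have hLt : L ≤ g t := (Real.log_le_iff_le_exp hK0).mpr hKE
      rw [min_eq_right h, Real.log_mul (ne_of_gt hK0) (Real.exp_ne_zero _),
        Real.log_exp, max_eq_right (by linarith : (0:ℝ) ≤ g t - L)]
      ring
  have key : ∀ A' : ℝ, max (max (g (2 * x₁) - L) (B * x₁)) (A + γ * L) ≤ A' →
      ∀ x > (0:ℝ), ∀ y ∈ Set.Icc (0:ℝ) (x / 2),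
        R x - R (x - y) ≤ γ * R y + A' := by
    intro A' hA' x hx y hy
    obtain ⟨hy0, hyx⟩ := hy
    have hA'1 : g (2 * x₁) - L ≤ A' :=
      le_trans (le_trans (le_max_left _ _) (le_max_left _ _)) hA'
    have hA'2 : B * x₁ ≤ A' :=
      le_trans (le_trans (le_max_right _ _) (le_max_left _ _)) hA'
    have hA'3 : A + γ * L ≤ A' := le_trans (le_max_right _ _) hA'
    have hA'pos : 0 < A' :=
      lt_of_lt_of_le (add_pos hA (mul_pos hγ.1 hL0)) hA'3
    rw [hR x, hR (x - y), hR y]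
    have hRy0 : 0 ≤ γ * max 0 (g y - L) :=
      mul_nonneg hγ.1.le (le_max_left _ _)
    have hRxy0 : g (x - y) - L ≤ max 0 (g (x - y) - L) := le_max_right _ _
    have hRxy0' : (0:ℝ) ≤ max 0 (g (x - y) - L) := le_max_left _ _
    rcases le_or_gt (g x) L with hgx | hgx
    · rw [max_eq_left (sub_nonpos.mpr hgx)]
      linarith
    · rw [max_eq_right (sub_nonneg.mpr hgx.le)]
      -- the set {z | Hbar z < 1} is nonempty (contains x) and bounded below by x₀
      have hmem : x ∈ {z | Hbar z < 1} := by
        have hKlt : K < Real.exp (g x) := by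
          have h := Real.exp_lt_exp.mpr hgx
          rwa [hLdef, Real.exp_log hK0] at h
        have : K * Real.exp (-g x) < 1 := by
          have h' := mul_lt_mul_of_pos_right hKlt (Real.exp_pos (-g x))
          rwa [← Real.exp_add, add_neg_cancel, Real.exp_zero] at h'
        simp only [Hbar, Set.mem_setOf_eq]
        exact min_lt_iff.mpr (Or.inr this)
      have hbdd : ∀ z ∈ {z | Hbar z < 1}, x₀ < z := by
        intro z hz
        simp only [Hbar, Set.mem_setOf_eq, min_lt_iff] at hz
        rcases hz with h1 | h1
        · exact absurd h1 (lt_irrefl 1)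
        · have hKlt : K < Real.exp (g z) := by
            have h' := mul_lt_mul_of_pos_right h1 (Real.exp_pos (g z))
            rw [one_mul, mul_assoc, ← Real.exp_add,
              neg_add_cancel, Real.exp_zero, mul_one] at h'
            exact h'
          have hLz : L < g z := by
            have h2 : Real.exp L < Real.exp (g z) := by
              rw [hLdef, Real.exp_log hK0]; exact hKlt
            exact Real.exp_lt_exp.mp h2
          exact hg_mono.lt_iff_lt.mp (lt_of_le_of_lt hgx₀L hLz)
      have hx₀x₁ : x₀ ≤ x₁ :=
        le_csInf ⟨x, hmem⟩ fun z hz => (hbdd z hz).le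
      rcases le_or_gt y x₀ with hyx₀ | hyx₀
      · rcases le_or_gt x (2 * x₁) with hx2 | hx2
        · have hgle : g x ≤ g (2 * x₁) := hg_mono.monotone hx2
          linarith
        · rcases eq_or_lt_of_le hy0 with heq | hy0'
          · rw [← heq]
            simp only [sub_zero]
            rw [max_eq_right (sub_nonneg.mpr hgx.le)]
            have : max 0 (g 0 - L) = 0 := by
              rw [max_eq_left]
              have : g 0 ≤ g x₀ := hg_mono.monotone hx₀.le
              linarith
            rw [this]
            linarith
          · have hxy : x₀ < x - y := by
              have : x₁ < x / 2 := by linarith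
              linarith
            have hlt : x - y < x := by linarith
            obtain ⟨c, hc, hderiv⟩ := exists_deriv_eq_slope g hlt
              hg_diff.continuous.continuousOn hg_diff.differentiableOn
            have hyne : x - (x - y) = y := by ring
            have heq2 : g x - g (x - y) = deriv g c * y := by
              rw [hderiv, hyne]
              field_simp
            have hcx₀ : x₀ < c := lt_trans hxy hc.1
            have hcB : deriv g c < B := hg_B c hcx₀
            have hbound : g x - g (x - y) ≤ B * x₁ := by
              rw [heq2]
              calc deriv g c * y ≤ B * y :=
                    mul_le_mul_of_nonneg_right hcB.le hy0
                _ ≤ B * x₁ := mul_le_mul_of_nonneg_left (le_trans hyx₀ hx₀x₁) hB.le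
            linarith
      · have hC3 := hg_C3 x y hyx₀ hyx
        have hgy : g y ≤ max 0 (g y - L) + L := by
          have := le_max_right 0 (g y - L); linarith
        have := mul_le_mul_of_nonneg_left hgy hγ.1.le
        nlinarith
  exact ⟨⟨_, key _ le_rfl⟩, key⟩
end
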